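/- Let δ: A ⥤ B, α: A ⥤ C, β: B ⥤ D, γ: C ⥤ D be a strictly commutative square of categories. Assume α and β are Grothendieck fibrations and that δ maps morphisms that are strongly Cartesian with respect to α to morphisms that are strongly Cartesian with respect to β. Then the square is Cartesian if and only if for every object c of C the functor A_c ⥤ B_{γ(c)} induced by δ between the fibers is an equivalence of categories. -/

import Mathlib

open CategoryTheory

universe v₁ v₂ v₃ v₄ u₁ u₂ u₃ u₄

namespace PaperSquare

variable {A : Type u₁} {B : Type u₂} {C : Type u₃} {D : Type u₄}
variable [Category.{v₁} A] [Category.{v₂} B] [Category.{v₃} C] [Category.{v₄} D]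

/-- The strict fiber product `B ×_D C` of two functors `β : B ⥤ D` and `γ : C ⥤ D`:
objects are pairs `(b, c)` with `β(b) = γ(c)`, morphisms are pairs `(f, g)` with
`β(f) = γ(g)` (up to the identifications of the objects). -/
structure StrictPullback (β : B ⥤ D) (γ : C ⥤ D) : Type max u₂ u₃ where
  left : B
  right : C
  eq : β.obj left = γ.obj right

namespace StrictPullback

variable {β : B ⥤ D} {γ : C ⥤ D}

/-- Morphisms in the strict fiber product. -/
@[ext]
structure Hom (x y : StrictPullback β γ) : Type max v₂ v₃ where
  left : x.left ⟶ y.left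
  right : x.right ⟶ y.right
  w : β.map left = eqToHom x.eq ≫ γ.map right ≫ eqToHom y.eq.symm

instance : Category (StrictPullback β γ) where
  Hom := Hom
  id x := ⟨𝟙 _, 𝟙 _, by simp⟩
  comp f g := ⟨f.left ≫ g.left, f.right ≫ g.right, by
    rw [Functor.map_comp, Functor.map_comp, f.w, g.w]; simp⟩
  id_comp f := by apply Hom.ext <;> simp
  comp_id f := by apply Hom.ext <;> simp
  assoc f g h := by apply Hom.ext <;> simp

@[simp] lemma id_left' (x : StrictPullback β γ) : (𝟙 x : Hom x x).left = 𝟙 x.left := rfl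
@[simp] lemma id_right' (x : StrictPullback β γ) : (𝟙 x : Hom x x).right = 𝟙 x.right := rfl
@[simp] lemma comp_left' {x y z : StrictPullback β γ} (f : x ⟶ y) (g : y ⟶ z) :
    (f ≫ g).left = Hom.left f ≫ Hom.left g := rfl
@[simp] lemma comp_right' {x y z : StrictPullback β γ} (f : x ⟶ y) (g : y ⟶ z) :
    (f ≫ g).right = Hom.right f ≫ Hom.right g := rfl

end StrictPullback

/-- The functor `A ⥤ B ×_D C` induced by a strictly commutative square. -/
def toPullback (δ : A ⥤ B) (α : A ⥤ C) (β : B ⥤ D) (γ : C ⥤ D)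
    (hsq : δ ⋙ β = α ⋙ γ) : A ⥤ StrictPullback β γ where
  obj a := ⟨δ.obj a, α.obj a, Functor.congr_obj hsq a⟩
  map f := ⟨δ.map f, α.map f, Functor.congr_hom hsq f⟩
  map_id a := by apply StrictPullback.Hom.ext <;> simp
  map_comp f g := by apply StrictPullback.Hom.ext <;> simp

/-- The square is Cartesian if the induced functor `A ⥤ B ×_D C` is an equivalence. -/
def IsCartesianSq (δ : A ⥤ B) (α : A ⥤ C) (β : B ⥤ D) (γ : C ⥤ D)
    (hsq : δ ⋙ β = α ⋙ γ) : Prop :=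
  (toPullback δ α β γ hsq).IsEquivalence

/-- The full subcategory of the comma category `(β ↓ γ)` spanned by the objects
`(b, c, ν : β(b) → γ(c))` in which `ν` is an isomorphism. -/
def IsoComma (β : B ⥤ D) (γ : C ⥤ D) :=
  ObjectProperty.FullSubcategory (fun x : Comma β γ => IsIso x.hom)

instance (β : B ⥤ D) (γ : C ⥤ D) : Category (IsoComma β γ) :=
  ObjectProperty.FullSubcategory.category _

/-- The functor `A ⥤ (β ↓ γ)^≅` induced by a strictly commutative square. -/
def toIsoComma (δ : A ⥤ B) (α : A ⥤ C) (β : B ⥤ D) (γ : C ⥤ D)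
    (hsq : δ ⋙ β = α ⋙ γ) : A ⥤ IsoComma β γ where
  obj a := ⟨{ left := δ.obj a, right := α.obj a,
              hom := eqToHom (Functor.congr_obj hsq a) }, inferInstance⟩
  map {a a'} f := ⟨
    { left := δ.map f
      right := α.map f
      w := by
        have h := Functor.congr_hom hsq f
        simp only [Functor.comp_map] at h
        simp [h] }⟩

/-- The square is 2-Cartesian if the induced functor to the iso-comma category is an
equivalence. -/
def Is2CartesianSq (δ : A ⥤ B) (α : A ⥤ C) (β : B ⥤ D) (γ : C ⥤ D)
    (hsq : δ ⋙ β = α ⋙ γ) : Prop :=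
  (toIsoComma δ α β γ hsq).IsEquivalence

/-- A functor `β : B ⥤ D` is an iso-fibration if every isomorphism `β(b) ≅ d` lifts to an
isomorphism `b ≅ b'` with `β(b') = d` mapping to it strictly. -/
def IsIsoFibration (β : B ⥤ D) : Prop :=
  ∀ (b : B) (d : D) (ψ : β.obj b ≅ d), ∃ (b' : B) (e : β.obj b' = d) (φ : b ≅ b'),
    β.map φ.hom = ψ.hom ≫ eqToHom e.symm

/-- A morphism `ξ : x ⟶ y` is strongly coCartesian with respect to `p : E ⥤ S` if for every
morphism `h : x ⟶ z` and every factorization `p(h) = v ∘ p(ξ)` there is a unique morphism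
`w : y ⟶ z` with `p(w) = v` and `w ∘ ξ = h`. -/
def IsStronglyCocartesian {E : Type u₁} {S : Type u₂} [Category.{v₁} E] [Category.{v₂} S]
    (p : E ⥤ S) {x y : E} (ξ : x ⟶ y) : Prop :=
  ∀ (z : E) (h : x ⟶ z) (v : p.obj y ⟶ p.obj z), p.map h = p.map ξ ≫ v →
    ∃! w : y ⟶ z, p.map w = v ∧ ξ ≫ w = h

/-- A morphism `ξ : x ⟶ y` is strongly Cartesian with respect to `p : E ⥤ S` if for every
morphism `h : z ⟶ y` and every factorization `p(h) = p(ξ) ∘ v` there is a unique morphism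
`w : z ⟶ x` with `p(w) = v` and `ξ ∘ w = h`. -/
def IsStronglyCartesian {E : Type u₁} {S : Type u₂} [Category.{v₁} E] [Category.{v₂} S]
    (p : E ⥤ S) {x y : E} (ξ : x ⟶ y) : Prop :=
  ∀ (z : E) (h : z ⟶ y) (v : p.obj z ⟶ p.obj x), p.map h = v ≫ p.map ξ →
    ∃! w : z ⟶ x, p.map w = v ∧ w ≫ ξ = h

/-- `p : E ⥤ S` is a Grothendieck opfibration if every morphism `p(x) ⟶ s` admits a strongly
coCartesian lift starting at `x`. -/
def IsGrothendieckOpfibration {E : Type u₁} {S : Type u₂} [Category.{v₁} E] [Category.{v₂} S]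
    (p : E ⥤ S) : Prop :=
  ∀ (x : E) (s : S) (f : p.obj x ⟶ s), ∃ (y : E) (ξ : x ⟶ y) (hy : p.obj y = s),
    p.map ξ = f ≫ eqToHom hy.symm ∧ IsStronglyCocartesian p ξ

/-- `p : E ⥤ S` is a Grothendieck fibration if every morphism `s ⟶ p(y)` admits a strongly
Cartesian lift ending at `y`. -/
def IsGrothendieckFibration {E : Type u₁} {S : Type u₂} [Category.{v₁} E] [Category.{v₂} S]
    (p : E ⥤ S) : Prop :=
  ∀ (y : E) (s : S) (f : s ⟶ p.obj y), ∃ (x : E) (ξ : x ⟶ y) (hx : p.obj x = s),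
    p.map ξ = eqToHom hx ≫ f ∧ IsStronglyCartesian p ξ

section Fiber

variable {E : Type u₁} {S : Type u₂} [Category.{v₁} E] [Category.{v₂} S]

/-- The fiber of `p : E ⥤ S` over `s`: objects of `E` mapping to `s` and morphisms mapping
to `𝟙 s`. -/
def Fiber (p : E ⥤ S) (s : S) : Type u₁ := {x : E // p.obj x = s}

instance Fiber.category (p : E ⥤ S) (s : S) : Category (Fiber p s) where
  Hom x y := {f : x.1 ⟶ y.1 // p.map f = eqToHom (x.2.trans y.2.symm)}
  id x := ⟨𝟙 _, by simp⟩
  comp f g := ⟨f.1 ≫ g.1, by rw [Functor.map_comp, f.2, g.2, eqToHom_trans]⟩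
  id_comp f := Subtype.ext (Category.id_comp f.1)
  comp_id f := Subtype.ext (Category.comp_id f.1)
  assoc f g h := Subtype.ext (Category.assoc f.1 g.1 h.1)

end Fiber

variable {δ : A ⥤ B} {α : A ⥤ C} {β : B ⥤ D} {γ : C ⥤ D}

/-- The functor `A_c ⥤ B_{γ(c)}` between fibers induced by `δ`. -/
def fiberFunctor (hsq : δ ⋙ β = α ⋙ γ) (c : C) : Fiber α c ⥤ Fiber β (γ.obj c) where
  obj x := ⟨δ.obj x.1, by
    have h1 : β.obj (δ.obj x.1) = γ.obj (α.obj x.1) := Functor.congr_obj hsq x.1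
    rw [h1, x.2]⟩
  map {x y} f := ⟨δ.map f.1, by
    have h := Functor.congr_hom hsq f.1
    simp only [Functor.comp_map] at h
    rw [h, f.2]
    simp [eqToHom_map]⟩
  map_id x := Subtype.ext (δ.map_id x.1)
  map_comp f g := Subtype.ext (δ.map_comp f.1 g.1)


/-!
Both directions are checked separately for faithfulness, fullness and essential surjectivity.

A morphism of the fiber `A_c` is a morphism of `A` whose image under `α` is an identity, so it is
the same as a morphism of `B ×_D C` between objects `(δ a, α a)` whose `C`-component is an
identity. Hence the fiber functors inherit faithfulness and fullness from `A ⥤ B ×_D C`. For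
essential surjectivity, the `C`-component of an isomorphism `(δ a, α a) ≅ (b, c)` is turned into
an identity by lifting it to an isomorphism `a ≅ a'` along the isofibration `α`.

Conversely, let `(f, g) : (δ x, α x) ⟶ (δ y, α y)`, and let `ξ : z ⟶ y` be a strongly Cartesian lift
of `g` with `α z = α x`. Morphisms `x ⟶ y` over `g` are exactly the composites `v ≫ ξ` with
`v : x ⟶ z` in the fiber over `α x`. Since `δ ξ` is again strongly Cartesian, `f` is `w ≫ δ ξ` for
a unique `w` in the fiber of `β`. So fullness and faithfulness of `A ⥤ B ×_D C` reduce to fullness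
and faithfulness of the fiber functor over `α x`.
-/

namespace StrictPullback

def fst (β : B ⥤ D) (γ : C ⥤ D) : StrictPullback β γ ⥤ B where
  obj P := P.left
  map f := f.left

def snd (β : B ⥤ D) (γ : C ⥤ D) : StrictPullback β γ ⥤ C where
  obj P := P.right
  map f := f.right

def isoMk {P Q : StrictPullback β γ} (l : P.left ≅ Q.left) (r : P.right ≅ Q.right)
    (w : β.map l.hom = eqToHom P.eq ≫ γ.map r.hom ≫ eqToHom Q.eq.symm) : P ≅ Q where
  hom := ⟨l.hom, r.hom, w⟩
  inv := ⟨l.inv, r.inv, by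
    rw [← cancel_epi (β.map l.hom), ← β.map_comp, l.hom_inv_id, w]
    simp⟩
  hom_inv_id := Hom.ext l.hom_inv_id r.hom_inv_id
  inv_hom_id := Hom.ext l.inv_hom_id r.inv_hom_id

lemma map_left_eq_eqToHom {P Q : StrictPullback β γ} (f : P ⟶ Q) (h : P.right = Q.right)
    (hf : f.right = eqToHom h) :
    β.map f.left = eqToHom (P.eq.trans ((congrArg γ.obj h).trans Q.eq.symm)) := by
  rw [f.w, hf]
  simp [eqToHom_map]

end StrictPullback

section Fibrations

variable {E : Type u₁} {S : Type u₂} [Category.{v₁} E] [Category.{v₂} S] {p : E ⥤ S}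

lemma eqToHom_eq_eqToHom_comp_map_eqToHom_comp (p : E ⥤ S) {a b : S} {y z : E} (h : a = b)
    (hy : a = p.obj y) (hyz : y = z) (hz : p.obj z = b) :
    eqToHom h = eqToHom hy ≫ p.map (eqToHom hyz) ≫ eqToHom hz := by
  subst hyz
  simp

def Fiber.forget (p : E ⥤ S) (s : S) : Fiber p s ⥤ E where
  obj x := x.1
  map f := f.1

def Fiber.isoMk {s : S} {x y : Fiber p s} (e : x.1 ≅ y.1)
    (he : p.map e.hom = eqToHom (x.2.trans y.2.symm)) : x ≅ y where
  hom := ⟨e.hom, he⟩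
  inv := ⟨e.inv, by
    rw [← cancel_epi (p.map e.hom), ← p.map_comp, e.hom_inv_id, he]
    simp⟩
  hom_inv_id := Subtype.ext e.hom_inv_id
  inv_hom_id := Subtype.ext e.inv_hom_id

lemma IsStronglyCartesian.isIso {x y : E} {ξ : x ⟶ y} (hξ : IsStronglyCartesian p ξ)
    [IsIso (p.map ξ)] : IsIso ξ := by
  obtain ⟨σ, ⟨hσ, hσξ⟩, -⟩ := hξ y (𝟙 y) (inv (p.map ξ)) (by simp)
  refine ⟨σ, (hξ x ξ (𝟙 _) (by simp)).unique ⟨?_, ?_⟩ ⟨p.map_id x, Category.id_comp ξ⟩, hσξ⟩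
  · simp [hσ]
  · rw [Category.assoc, hσξ, Category.comp_id]

lemma IsGrothendieckFibration.isIsoFibration (hp : IsGrothendieckFibration p) :
    IsIsoFibration p := by
  intro x s ψ
  obtain ⟨x', ξ, hx', hξ, hcart⟩ := hp x s ψ.inv
  have : IsIso (p.map ξ) := by rw [hξ]; infer_instance
  have := hcart.isIso
  exact ⟨x', hx', (asIso ξ).symm, by simp [hξ]⟩

lemma IsStronglyCartesian.existsUnique_fiberHom {s : S} {x z : Fiber p s} {y : E}
    {ξ : z.1 ⟶ y} (hξ : IsStronglyCartesian p ξ) (f : x.1 ⟶ y)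
    (hf : p.map f = eqToHom (x.2.trans z.2.symm) ≫ p.map ξ) :
    ∃! v : x ⟶ z, v.1 ≫ ξ = f := by
  obtain ⟨v, ⟨hv, hvξ⟩, hunique⟩ := hξ x.1 f _ hf
  exact ⟨⟨v, hv⟩, hvξ, fun w hw => Subtype.ext (hunique w.1 ⟨w.2, hw⟩)⟩

end Fibrations

def PreservesStronglyCartesian (δ : A ⥤ B) (α : A ⥤ C) (β : B ⥤ D) : Prop :=
  ∀ {x y : A} (f : x ⟶ y), IsStronglyCartesian α f → IsStronglyCartesian β (δ.map f)

section Square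

variable (hsq : δ ⋙ β = α ⋙ γ)

lemma map_map_eq_of_comp_eq {x y : A} (f : x ⟶ y) :
    β.map (δ.map f) = eqToHom (Functor.congr_obj hsq x) ≫ γ.map (α.map f) ≫
      eqToHom (Functor.congr_obj hsq y).symm :=
  Functor.congr_hom hsq f

lemma faithful_fiberFunctor [(toPullback δ α β γ hsq).Faithful] (c : C) :
    (fiberFunctor hsq c).Faithful where
  map_injective {_ _} f g h := Subtype.ext <| (toPullback δ α β γ hsq).map_injective <|
    StrictPullback.Hom.ext (congrArg Subtype.val h) (f.2.trans g.2.symm)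

lemma full_fiberFunctor [(toPullback δ α β γ hsq).Full] (c : C) :
    (fiberFunctor hsq c).Full where
  map_surjective {x y} u := by
    obtain ⟨f, hf⟩ := (toPullback δ α β γ hsq).map_surjective (X := x.1) (Y := y.1)
      ⟨u.1, eqToHom (x.2.trans y.2.symm),
        u.2.trans (eqToHom_eq_eqToHom_comp_map_eqToHom_comp γ _ _ _ _)⟩
    exact ⟨⟨f, congrArg StrictPullback.Hom.right hf⟩,
      Subtype.ext (congrArg StrictPullback.Hom.left hf)⟩

lemma exists_iso_toPullback_obj_right_eq_eqToHom (hα : IsIsoFibration α)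
    [(toPullback δ α β γ hsq).EssSurj] (P : StrictPullback β γ) :
    ∃ (a : A) (ha : α.obj a = P.right) (e : (toPullback δ α β γ hsq).obj a ≅ P),
      e.hom.right = eqToHom ha := by
  let e := (toPullback δ α β γ hsq).objObjPreimageIso P
  obtain ⟨a, ha, φ, hφ⟩ := hα _ P.right ((StrictPullback.snd β γ).mapIso e)
  exact ⟨a, ha, (toPullback δ α β γ hsq).mapIso φ.symm ≪≫ e,
    (Iso.inv_comp_eq (α.mapIso φ)).2 ((comp_eqToHom_iff _ _ _).1 hφ.symm)⟩

lemma essSurj_fiberFunctor (hα : IsIsoFibration α) [(toPullback δ α β γ hsq).EssSurj]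
    (c : C) : (fiberFunctor hsq c).EssSurj where
  mem_essImage b := by
    obtain ⟨a, ha, e, he⟩ := exists_iso_toPullback_obj_right_eq_eqToHom hsq hα ⟨b.1, c, b.2⟩
    exact ⟨⟨a, ha⟩, ⟨Fiber.isoMk ((StrictPullback.fst β γ).mapIso e)
      (StrictPullback.map_left_eq_eqToHom e.hom ha he)⟩⟩

/- `h` is arbitrary so that the lemma matches whichever proof the morphisms of `Fiber β _` carry;
`((toPullback …).obj x).right` is `α.obj x` only after unfolding, hence `erw` and `rfl`. -/
lemma map_left_eq_eqToHom_comp_map_map {x y z : A} {ξ : z ⟶ y} (hz : α.obj z = α.obj x)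
    (φ : (toPullback δ α β γ hsq).obj x ⟶ (toPullback δ α β γ hsq).obj y)
    (hφ : α.map ξ = eqToHom hz ≫ φ.right) (h : β.obj (δ.obj x) = β.obj (δ.obj z)) :
    β.map φ.left = eqToHom h ≫ β.map (δ.map ξ) := by
  rw [φ.w, map_map_eq_of_comp_eq hsq, hφ]
  erw [γ.map_comp, eqToHom_map]
  simp only [Category.assoc, eqToHom_trans_assoc]
  rfl

lemma existsUnique_fiberHom_comp_map_eq_left (hδ : PreservesStronglyCartesian δ α β)
    {x y z : A} {ξ : z ⟶ y} (hξ : IsStronglyCartesian α ξ) (hz : α.obj z = α.obj x)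
    (φ : (toPullback δ α β γ hsq).obj x ⟶ (toPullback δ α β γ hsq).obj y)
    (hφ : α.map ξ = eqToHom hz ≫ φ.right) :
    ∃! w : (fiberFunctor hsq (α.obj x)).obj ⟨x, rfl⟩ ⟶ (fiberFunctor hsq (α.obj x)).obj ⟨z, hz⟩,
      w.1 ≫ δ.map ξ = φ.left :=
  (hδ ξ hξ).existsUnique_fiberHom (x := (fiberFunctor hsq (α.obj x)).obj ⟨x, rfl⟩)
    (z := (fiberFunctor hsq (α.obj x)).obj ⟨z, hz⟩) φ.left
    (map_left_eq_eqToHom_comp_map_map hsq hz φ hφ _)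

lemma faithful_toPullback (hα : IsGrothendieckFibration α) (hδ : PreservesStronglyCartesian δ α β)
    [∀ c, (fiberFunctor hsq c).Faithful] : (toPullback δ α β γ hsq).Faithful where
  map_injective {x y} f g hfg := by
    have hfg_right : α.map f = α.map g := congrArg StrictPullback.Hom.right hfg
    obtain ⟨z, ξ, hz, hξ, hcart⟩ := hα y (α.obj x) (α.map f)
    obtain ⟨v, rfl, -⟩ := hcart.existsUnique_fiberHom (x := ⟨x, rfl⟩) (z := ⟨z, hz⟩) f
      (by rw [hξ]; simp)
    obtain ⟨v', rfl, -⟩ := hcart.existsUnique_fiberHom (x := ⟨x, rfl⟩) (z := ⟨z, hz⟩) g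
      (by rw [hξ, hfg_right]; simp)
    have hvv' : (fiberFunctor hsq (α.obj x)).map v = (fiberFunctor hsq (α.obj x)).map v' :=
      (existsUnique_fiberHom_comp_map_eq_left hsq hδ hcart hz
        ((toPullback δ α β γ hsq).map (v.1 ≫ ξ)) hξ).unique (δ.map_comp _ _).symm
        ((δ.map_comp _ _).symm.trans (congrArg StrictPullback.Hom.left hfg).symm)
    rw [(fiberFunctor hsq (α.obj x)).map_injective hvv']

lemma full_toPullback (hα : IsGrothendieckFibration α) (hδ : PreservesStronglyCartesian δ α β)
    [∀ c, (fiberFunctor hsq c).Full] : (toPullback δ α β γ hsq).Full where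
  map_surjective {x y} φ := by
    obtain ⟨z, ξ, hz, hξ, hcart⟩ := hα y (α.obj x) φ.right
    obtain ⟨w, hw, -⟩ := existsUnique_fiberHom_comp_map_eq_left hsq hδ hcart hz φ hξ
    obtain ⟨m, rfl⟩ := (fiberFunctor hsq (α.obj x)).map_surjective w
    refine ⟨m.1 ≫ ξ, StrictPullback.Hom.ext ((δ.map_comp _ _).trans hw) ?_⟩
    exact (α.map_comp _ _).trans
      (by erw [m.2, hξ, eqToHom_trans_assoc, eqToHom_refl, Category.id_comp])

lemma essSurj_toPullback [∀ c, (fiberFunctor hsq c).EssSurj] :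
    (toPullback δ α β γ hsq).EssSurj where
  mem_essImage P := by
    let x₀ := (fiberFunctor hsq P.right).objPreimage ⟨P.left, P.eq⟩
    let e := (fiberFunctor hsq P.right).objObjPreimageIso ⟨P.left, P.eq⟩
    exact ⟨x₀.1, ⟨StrictPullback.isoMk ((Fiber.forget β _).mapIso e) (eqToIso x₀.2)
      (e.hom.2.trans (eqToHom_eq_eqToHom_comp_map_eqToHom_comp γ _ _ x₀.2 _))⟩⟩

end Square

theorem isCartesianSq_iff_fiberwise_equivalence_general
    (hsq : δ ⋙ β = α ⋙ γ)
    (hα : IsGrothendieckFibration α)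
    (hδ : ∀ {x y : A} (f : x ⟶ y), IsStronglyCartesian α f → IsStronglyCartesian β (δ.map f)) :
    IsCartesianSq δ α β γ hsq ↔ ∀ c : C, (fiberFunctor hsq c).IsEquivalence := by
  constructor
  · intro hF c
    have : (toPullback δ α β γ hsq).IsEquivalence := hF
    exact { faithful := faithful_fiberFunctor hsq c
            full := full_fiberFunctor hsq c
            essSurj := essSurj_fiberFunctor hsq hα.isIsoFibration c }
  · intro hΦ
    exact { faithful := faithful_toPullback hsq hα hδ
            full := full_toPullback hsq hα hδ
            essSurj := essSurj_toPullback hsq }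

/-- If `α` and `β` are Grothendieck fibrations and `δ` maps strongly Cartesian
morphisms (w.r.t. `α`) to strongly Cartesian morphisms (w.r.t. `β`), then the square is
Cartesian if and only if for every object `c` of `C` the induced functor between the fibers
`A_c ⥤ B_{γ(c)}` is an equivalence of categories. -/
theorem isCartesianSq_iff_fiberwise_equivalence
    (hsq : δ ⋙ β = α ⋙ γ)
    (hα : IsGrothendieckFibration α) (hβ : IsGrothendieckFibration β)
    (hδ : ∀ {x y : A} (f : x ⟶ y), IsStronglyCartesian α f → IsStronglyCartesian β (δ.map f)) :
    IsCartesianSq δ α β γ hsq ↔ ∀ c : C, (fiberFunctor hsq c).IsEquivalence :=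
  isCartesianSq_iff_fiberwise_equivalence_general hsq hα hδ

end PaperSquare
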